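/- For any rational function f without poles on the set of points with x = y, the function (f - τ·f)/(x - y) also has no poles on that set, and equals 2·D(f), where D = ½(∂/∂x − ∂/∂y) and τ swaps the variables x and y. -/

import Mathlib

/-!
Write `f = P/Q` and `τ` for the swap of `x = X p` and `y = X q`. Modulo `x - y` the substitution `τ`
is the identity, so `x - y` divides `P·τQ - τP·Q`; call the quotient `P'`. Then
`(f - τf)/(x - y) = P'/(Q·τQ)`, and `Q·τQ = Q²` on the diagonal. Differentiating
`P·τQ - τP·Q = (x - y)·P'` in `x` and restricting to the diagonal, where `∂ₓ ∘ τ = τ ∘ ∂_y`, gives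
`P' = (∂ₓ - ∂_y)P·Q - P·(∂ₓ - ∂_y)Q` there.
-/

open MvPolynomial

section

variable {R σ : Type*} [CommSemiring R] [DecidableEq σ] (p q : σ)

theorem rename_swap_rename_swap (f : MvPolynomial σ R) :
    rename (Equiv.swap p q) (rename (Equiv.swap p q) f) = f := by
  rw [rename_rename, Function.Involutive.comp_self (Equiv.swap_apply_self p q), rename_id_apply]

theorem comp_swap_eq_self_of_apply_eq {β : Type*} {v : σ → β} (hv : v p = v q) :
    v ∘ Equiv.swap p q = v := by
  ext i
  grind

theorem eval_rename_swap_of_apply_eq {v : σ → R} (hv : v p = v q) (f : MvPolynomial σ R) :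
    eval v (rename (Equiv.swap p q) f) = eval v f := by
  rw [eval_rename, comp_swap_eq_self_of_apply_eq p q hv]

theorem pderiv_rename_swap (f : MvPolynomial σ R) :
    pderiv p (rename (Equiv.swap p q) f) = rename (Equiv.swap p q) (pderiv q f) := by
  simpa using pderiv_rename (Equiv.swap p q).injective q f

end

section

variable {R σ : Type*} [CommRing R]

theorem X_sub_X_dvd_sub_rename_swap [DecidableEq σ] (p q : σ) (f : MvPolynomial σ R) :
    X p - X q ∣ f - rename (Equiv.swap p q) f := by
  set I := Ideal.span {(X p - X q : MvPolynomial σ R)}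
  have hX : Ideal.Quotient.mk I (X p) = Ideal.Quotient.mk I (X q) :=
    Ideal.Quotient.eq.mpr (Ideal.mem_span_singleton_self _)
  have hmk : (Ideal.Quotient.mkₐ R I).comp (rename (Equiv.swap p q)) = Ideal.Quotient.mkₐ R I := by
    refine algHom_ext fun i => ?_
    simp only [AlgHom.comp_apply, rename_X, Ideal.Quotient.mkₐ_eq_mk]
    rcases eq_or_ne i p with rfl | hip
    · simp [hX]
    rcases eq_or_ne i q with rfl | hiq
    · simp [hX]
    · rw [Equiv.swap_apply_of_ne_of_ne hip hiq]
  rw [← Ideal.mem_span_singleton, ← Ideal.Quotient.eq]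
  exact (congrArg (fun φ => φ f) hmk).symm

theorem eval_pderiv_X_sub_X_mul {p q : σ} (hpq : p ≠ q) {v : σ → R} (hv : v p = v q)
    (h : MvPolynomial σ R) : eval v (pderiv p ((X p - X q) * h)) = eval v h := by
  simp [pderiv_X_of_ne hpq.symm, hv]

end

/-- For a rational function `f = P/Q` without poles on the locus `x = y`
(`x`, `y` being the `p`-th and `q`-th variables), the function
`(f - τ·f)/(x - y)` also has no poles on that locus (it admits a representation
`P'/Q'` with `Q'` nonvanishing on `x = y`), and on that locus its value equals
`2·D(f)` where `D = ½(∂/∂x − ∂/∂y)` and `τ` swaps `x` and `y`. -/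
theorem stmt3 (N : ℕ) (p q : Fin N) (hpq : p ≠ q)
    (P Q : MvPolynomial (Fin N) ℂ)
    (hQ : ∀ v : Fin N → ℂ, v p = v q → eval v Q ≠ 0) :
    ∃ P' Q' : MvPolynomial (Fin N) ℂ,
      (∀ v : Fin N → ℂ, v p = v q → eval v Q' ≠ 0) ∧
      (∀ v : Fin N → ℂ, v p ≠ v q → eval v Q ≠ 0 →
        eval v (rename (Equiv.swap p q) Q) ≠ 0 →
        (eval v P / eval v Q -
            eval (v ∘ Equiv.swap p q) P / eval (v ∘ Equiv.swap p q) Q) / (v p - v q)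
          = eval v P' / eval v Q') ∧
      (∀ v : Fin N → ℂ, v p = v q →
        eval v P' / eval v Q' =
          2 * eval v
              ((1/2 : ℂ) • (pderiv p P - pderiv q P) * Q -
                P * ((1/2 : ℂ) • (pderiv p Q - pderiv q Q))) /
            (eval v Q) ^ 2) := by
  set τ := rename (R := ℂ) (Equiv.swap p q)
  obtain ⟨P', hP'⟩ := X_sub_X_dvd_sub_rename_swap p q (P * τ Q)
  rw [map_mul, rename_swap_rename_swap] at hP'
  refine ⟨P', Q * τ Q, fun v hv => ?_, fun v hv _ hτQv => ?_, fun v hv => ?_⟩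
  · rw [map_mul, eval_rename_swap_of_apply_eq p q hv]
    exact mul_ne_zero (hQ v hv) (hQ v hv)
  · have hv' : v p - v q ≠ 0 := sub_ne_zero.mpr hv
    have hP'v := congrArg (eval v) hP'
    simp only [τ, map_sub, map_mul, eval_rename, eval_X] at hP'v hτQv ⊢
    field_simp
    linear_combination hP'v
  · have hderiv := congrArg (fun g => eval v (pderiv p g)) hP'
    simp only [eval_pderiv_X_sub_X_mul hpq hv] at hderiv
    simp only [τ, map_sub, Derivation.leibniz, smul_eq_mul,
      map_add, map_mul, pderiv_rename_swap, eval_rename_swap_of_apply_eq p q hv] at hderiv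
    rw [map_mul, eval_rename_swap_of_apply_eq p q hv, ← hderiv]
    simp only [map_sub, map_mul, smul_eq_C_mul, eval_C]
    field_simp
    ring
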